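/- arXiv:2306.05234 — 5 statements merged into one kernel-verified Lean document; each statement's English description precedes it below -/
import Mathlib

section
/- For all x ∈ R^n with n ≥ 2, any orthonormal basis (e_1,...,e_n) of R^n, and any c ≥ 0, letting V = {±e_2,...,±e_n}, we have max over e ∈ V of |x^T(e + c·e_1)| ≥ sqrt((x^T x − (x^T e_1)^2)/(n−1)) + c·|x^T e_1|. -/
open scoped RealInnerProductSpace
open Finset

/-! Parseval's identity in the basis `e` gives `∑_{i ≠ i₀} ⟪x, e i⟫² = ‖x‖² - ⟪x, e i₀⟫²`, so
some `i ≠ i₀` has `⟪x, e i⟫²` at least the average `(‖x‖² - ⟪x, e i₀⟫²) / (n - 1)`. Choosing the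
sign `s` so that `s ⟪x, e i⟫` and `c ⟪x, e i₀⟫` have the same sign, the two terms of
`⟪x, s e i + c e i₀⟫` add up in absolute value. -/

lemma exists_sign_abs_mul_add_eq (v w : ℝ) :
    ∃ s : ℝ, (s = 1 ∨ s = -1) ∧ |s * v + w| = |v| + |w| := by
  obtain ⟨s, hs, hsign⟩ : ∃ s : ℝ, (s = 1 ∨ s = -1) ∧ 0 ≤ s * v * w := by
    rcases le_total 0 (v * w) with h | h
    · exact ⟨1, .inl rfl, by linarith⟩
    · exact ⟨-1, .inr rfl, by linarith⟩
  have hs_abs : |s| = 1 := by rcases hs with rfl | rfl <;> norm_num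
  refine ⟨s, hs, ?_⟩
  rw [(abs_add_eq_add_abs_iff _ _).2 (nonneg_and_nonneg_or_nonpos_and_nonpos_of_mul_nonneg hsign),
    abs_mul, hs_abs, one_mul]

lemma Finset.exists_mem_sum_div_card_le {ι : Type*} {s : Finset ι} (hs : s.Nonempty)
    (f : ι → ℝ) : ∃ i ∈ s, (∑ j ∈ s, f j) / #s ≤ f i := by
  apply exists_le_of_sum_le hs
  rw [sum_const, nsmul_eq_mul, mul_div_cancel₀ _ (by exact_mod_cast hs.card_pos.ne')]

namespace OrthonormalBasis

variable {ι E : Type*} [Fintype ι] [DecidableEq ι] [NormedAddCommGroup E]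
  [InnerProductSpace ℝ E] (b : OrthonormalBasis ι ℝ E) (x : E) (i₀ : ι)

lemma sum_erase_sq_inner_left :
    ∑ i ∈ univ.erase i₀, ⟪x, b i⟫ ^ 2 = ‖x‖ ^ 2 - ⟪x, b i₀⟫ ^ 2 := by
  rw [← b.sum_sq_inner_left x, ← add_sum_erase univ _ (mem_univ i₀), add_sub_cancel_left]

lemma exists_ne_div_le_sq_inner (hι : 2 ≤ Fintype.card ι) :
    ∃ i ≠ i₀, (‖x‖ ^ 2 - ⟪x, b i₀⟫ ^ 2) / (Fintype.card ι - 1) ≤ ⟪x, b i⟫ ^ 2 := by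
  have hcard : #(univ.erase i₀) = Fintype.card ι - 1 := card_erase_of_mem (mem_univ i₀)
  obtain ⟨i, hi, hle⟩ := exists_mem_sum_div_card_le
    (s := univ.erase i₀) (card_pos.1 (by omega)) (fun i ↦ ⟪x, b i⟫ ^ 2)
  refine ⟨i, ne_of_mem_erase hi, ?_⟩
  rwa [b.sum_erase_sq_inner_left, hcard, Nat.cast_sub (by omega), Nat.cast_one] at hle

end OrthonormalBasis

theorem stmt1_general (n : ℕ) (hn : 2 ≤ n)
    (e : Fin n → EuclideanSpace ℝ (Fin n)) (he : Orthonormal ℝ e)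
    (i₀ : Fin n)
    (c : ℝ) (hc : 0 ≤ c) (x : EuclideanSpace ℝ (Fin n)) :
    ∃ i : Fin n, i ≠ i₀ ∧ ∃ s : ℝ, (s = 1 ∨ s = -1) ∧
      |⟪x, s • e i + c • e i₀⟫| ≥
        Real.sqrt ((‖x‖^2 - ⟪x, e i₀⟫^2) / (n - 1)) + c * |⟪x, e i₀⟫| := by
  have hspan : Submodule.span ℝ (Set.range e) = ⊤ :=
    he.linearIndependent.span_eq_top_of_card_eq_finrank' (by simp)
  let b := OrthonormalBasis.mk he hspan.ge
  obtain ⟨i, hi, hle⟩ := b.exists_ne_div_le_sq_inner x i₀ (by simpa using hn)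
  simp only [b, OrthonormalBasis.coe_mk, Fintype.card_fin] at hle
  obtain ⟨s, hs, habs⟩ := exists_sign_abs_mul_add_eq ⟪x, e i⟫ (c * ⟪x, e i₀⟫)
  refine ⟨i, hi, s, hs, ?_⟩
  rw [inner_add_right, real_inner_smul_right, real_inner_smul_right, habs, abs_mul,
    abs_of_nonneg hc, ← Real.sqrt_sq_eq_abs ⟪x, e i⟫]
  gcongr

/-- For `n ≥ 2`, any orthonormal basis `(e i₀ = e_1, …)` of `ℝⁿ` (with `i₀` the first index),
any `c ≥ 0` and `x ∈ ℝⁿ`, the maximum over `e' ∈ V = {±e i : i ≠ i₀}` of `|xᵀ(e' + c • e i₀)|`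
is at least `√((‖x‖² − ⟪x, e i₀⟫²)/(n−1)) + c * |⟪x, e i₀⟫|` (max ≥ bound stated as an
existential). -/
theorem stmt1 (n : ℕ) (hn : 2 ≤ n)
    (e : Fin n → EuclideanSpace ℝ (Fin n)) (he : Orthonormal ℝ e)
    (hspan : Submodule.span ℝ (Set.range e) = ⊤)
    (i₀ : Fin n) (hi₀ : (i₀ : ℕ) = 0)
    (c : ℝ) (hc : 0 ≤ c) (x : EuclideanSpace ℝ (Fin n)) :
    ∃ i : Fin n, i ≠ i₀ ∧ ∃ s : ℝ, (s = 1 ∨ s = -1) ∧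
      |⟪x, s • e i + c • e i₀⟫| ≥
        Real.sqrt ((‖x‖^2 - ⟪x, e i₀⟫^2) / (n - 1)) + c * |⟪x, e i₀⟫| :=
  stmt1_general n hn e he i₀ c hc x
end

section
/- Let λ_q > 0, λ_n ≥ λ_q, 0 < k < π/4, and suppose the positive real number P satisfies λ_q ≥ P and P = (1 − c² sin²(kP/λ_n)) λ_q for some c ∈ [−1,1]. Then P ≥ 2λ_q / (1 + sqrt(1 + 4 c² k² λ_q²/λ_n²)) ≥ 2kλ_q/(λ_n + sqrt(λ_n² + 4k²λ_q²)) · (λ_n/k). -/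
/-! Writing `z = kP/λn`, the equation gives `λq - P = c² sin² z · λq ≤ c² z² λq`, i.e.
`a P² + P - λq ≥ 0` with `a = c²k²λq/λn²`. A nonnegative `P` satisfying this quadratic inequality
lies above its positive root `2λq / (1 + √(1 + 4aλq))`. That root decreases as `c²` grows, and at
`c² = 1` it is the second expression of the theorem after cancelling `k` and `λn`. -/

open Real

theorem two_mul_div_one_add_sqrt_le {a b x : ℝ} (ha : 0 ≤ a) (hx : 0 ≤ x)
    (h : b ≤ a * x ^ 2 + x) : 2 * b / (1 + √(1 + 4 * a * b)) ≤ x := by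
  set s := √(1 + 4 * a * b)
  have hs : 0 ≤ s := sqrt_nonneg _
  rw [div_le_iff₀ (by positivity)]
  rcases le_or_gt b 0 with hb | hb
  · nlinarith
  rcases ha.eq_or_lt with rfl | ha
  · simp only [s, zero_mul, mul_zero, add_zero, sqrt_one]
    linarith
  have hs_sq : s ^ 2 = 1 + 4 * a * b := sq_sqrt (by positivity)
  have hroot : s ≤ 2 * a * x + 1 := abs_le_of_sq_le_sq' (by nlinarith) (by positivity) |>.2
  have : 0 ≤ a * (x * (1 + s) - 2 * b) := by nlinarith
  linarith [(mul_nonneg_iff_of_pos_left ha).1 this]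

theorem le_mul_sq_add_of_eq_one_sub_sq_mul_sin_sq {lamq lamn k c P : ℝ} (hq : 0 ≤ lamq)
    (heq : P = (1 - c ^ 2 * sin (k * P / lamn) ^ 2) * lamq) :
    lamq ≤ c ^ 2 * k ^ 2 * lamq / lamn ^ 2 * P ^ 2 + P := by
  have hsin := sin_sq_le_sq (x := k * P / lamn)
  calc lamq = c ^ 2 * sin (k * P / lamn) ^ 2 * lamq + P := by linear_combination -heq
    _ ≤ c ^ 2 * (k * P / lamn) ^ 2 * lamq + P := by gcongr
    _ = c ^ 2 * k ^ 2 * lamq / lamn ^ 2 * P ^ 2 + P := by ring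

theorem two_mul_div_add_sqrt_mul_div_eq {lamq lamn k : ℝ} (hk : k ≠ 0) (hn : 0 < lamn) :
    2 * k * lamq / (lamn + √(lamn ^ 2 + 4 * k ^ 2 * lamq ^ 2)) * (lamn / k) =
      2 * lamq / (1 + √(1 + 4 * k ^ 2 * lamq ^ 2 / lamn ^ 2)) := by
  have hfactor : lamn ^ 2 + 4 * k ^ 2 * lamq ^ 2 =
      lamn ^ 2 * (1 + 4 * k ^ 2 * lamq ^ 2 / lamn ^ 2) := by
    field_simp
  rw [hfactor, sqrt_mul (sq_nonneg _), sqrt_sq hn.le]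
  have : 0 < 1 + √(1 + 4 * k ^ 2 * lamq ^ 2 / lamn ^ 2) := by positivity
  field_simp

theorem stmt10_general (lamq lamn k c P : ℝ)
    (hq : 0 < lamq) (hn : lamq ≤ lamn) (hk : 0 < k)
    (hc : c ∈ Set.Icc (-1 : ℝ) 1) (hP : 0 < P)
    (heq : P = (1 - c ^ 2 * Real.sin (k * P / lamn) ^ 2) * lamq) :
    P ≥ 2 * lamq / (1 + Real.sqrt (1 + 4 * c ^ 2 * k ^ 2 * lamq ^ 2 / lamn ^ 2)) ∧
    2 * lamq / (1 + Real.sqrt (1 + 4 * c ^ 2 * k ^ 2 * lamq ^ 2 / lamn ^ 2)) ≥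
      (2 * k * lamq / (lamn + Real.sqrt (lamn ^ 2 + 4 * k ^ 2 * lamq ^ 2))) * (lamn / k) := by
  have hquad := le_mul_sq_add_of_eq_one_sub_sq_mul_sin_sq hq.le heq
  constructor
  · have hroot := two_mul_div_one_add_sqrt_le (by positivity) hP.le hquad
    convert hroot using 4
    ring
  · rw [two_mul_div_add_sqrt_mul_div_eq hk.ne' (hq.trans_le hn)]
    have hc2 : c ^ 2 ≤ 1 := sq_le_one_iff_abs_le_one c |>.2 (abs_le.2 hc)
    gcongr
    linarith

/-- Lower bound on the value of the potential at critical points (Theorem 3):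
if `0 < P ≤ λq`, `0 < λq ≤ λn`, `0 < k < π/4`, `c² ≤ 1` and
`P = (1 − c² sin²(kP/λn)) λq`, then
`P ≥ 2λq / (1 + √(1 + 4c²k²λq²/λn²)) ≥ (2kλq/(λn + √(λn² + 4k²λq²))) * (λn/k)`. -/
theorem stmt10 (lamq lamn k c P : ℝ)
    (hq : 0 < lamq) (hn : lamq ≤ lamn) (hk : 0 < k) (hk' : k < Real.pi / 4)
    (hc : c ∈ Set.Icc (-1 : ℝ) 1) (hP : 0 < P) (hPq : lamq ≥ P)
    (heq : P = (1 - c ^ 2 * Real.sin (k * P / lamn) ^ 2) * lamq) :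
    P ≥ 2 * lamq / (1 + Real.sqrt (1 + 4 * c ^ 2 * k ^ 2 * lamq ^ 2 / lamn ^ 2)) ∧
    2 * lamq / (1 + Real.sqrt (1 + 4 * c ^ 2 * k ^ 2 * lamq ^ 2 / lamn ^ 2)) ≥
      (2 * k * lamq / (lamn + Real.sqrt (lamn ^ 2 + 4 * k ^ 2 * lamq ^ 2))) * (lamn / k) :=
  stmt10_general lamq lamn k c P hq hn hk hc hP heq
end

section
/- Let S ∈ R^{(n+1)×(n+1)} be skew-symmetric, θ : S^n → R differentiable with gradient ∇θ(x), and define T(x) = e^{Sθ(x)} x. Then the transpose of the Jacobian of T at x is ∇T(x) = (I − ∇θ(x) x^T S) e^{−Sθ(x)}, and if 1 − x^T S ∇θ(x) ≠ 0 then ∇T(x) is invertible with inverse e^{Sθ(x)} (I + ∇θ(x) x^T S / (1 − x^T S ∇θ(x))). -/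
/-!
`T y = exp (θ y • S) *ᵥ y` is the product of a matrix-valued and a vector-valued map, and
`d/dt exp (t • S) = exp (t • S) * S`, so the derivative of `T` at `x` is
`w ↦ exp (θ x • S) *ᵥ (w + θ'(w) • S *ᵥ x)`. Skew-symmetry gives `exp (-t • S)ᵀ = exp (t • S)`,
which identifies this map with the transpose of `(1 - g xᵀ S) exp (-θ x • S)`.
For the inverse, `A = g xᵀ S` has rank one, so `A * A = (xᵀ S g) • A` and `1 - A` is inverted by
`1 + (1 - xᵀ S g)⁻¹ • A` (Sherman–Morrison), while `exp (-t • S)` is inverted by `exp (t • S)`.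
-/

open Matrix

section ShermanMorrison

variable {K R : Type*} [Field K] [Ring R] [Algebra K R] {A : R} {c : K}

theorem one_sub_mul_one_add_inv_smul (hA : A * A = c • A) (hc : 1 - c ≠ 0) :
    (1 - A) * (1 + (1 - c)⁻¹ • A) = 1 := by
  calc (1 - A) * (1 + (1 - c)⁻¹ • A) = 1 + ((1 - c)⁻¹ * (1 - c) - 1) • A := by
        simp only [mul_add, sub_mul, one_mul, mul_one, mul_smul_comm, hA]
        module
    _ = 1 := by rw [inv_mul_cancel₀ hc, sub_self, zero_smul, add_zero]

theorem one_add_inv_smul_mul_one_sub (hA : A * A = c • A) (hc : 1 - c ≠ 0) :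
    (1 + (1 - c)⁻¹ • A) * (1 - A) = 1 := by
  calc (1 + (1 - c)⁻¹ • A) * (1 - A) = 1 + ((1 - c)⁻¹ * (1 - c) - 1) • A := by
        simp only [add_mul, mul_sub, one_mul, mul_one, smul_mul_assoc, hA, smul_smul]
        module
    _ = 1 := by rw [inv_mul_cancel₀ hc, sub_self, zero_smul, add_zero]

end ShermanMorrison

namespace Matrix

variable {m : Type*} [Fintype m]

theorem vecMulVec_mul_self {α : Type*} [CommSemiring α] (u v : m → α) :
    vecMulVec u v * vecMulVec u v = (v ⬝ᵥ u) • vecMulVec u v := by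
  rw [vecMulVec_mul_vecMulVec, vecMulVec_smul]

theorem vecMulVec_mul_mul_self {α : Type*} [CommSemiring α] (u v : m → α) (S : Matrix m m α) :
    (vecMulVec u v * S) * (vecMulVec u v * S) = (v ⬝ᵥ (S *ᵥ u)) • (vecMulVec u v * S) := by
  rw [vecMulVec_mul, vecMulVec_mul_self, dotProduct_mulVec]

variable [DecidableEq m] {𝔸 : Type*}

section

variable [NormedRing 𝔸] [NormedAlgebra ℚ 𝔸] [CompleteSpace 𝔸]

theorem exp_neg_mul_exp (A : Matrix m m 𝔸) : NormedSpace.exp (-A) * NormedSpace.exp A = 1 := by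
  rw [← exp_add_of_commute _ _ (Commute.refl A).neg_left, neg_add_cancel, NormedSpace.exp_zero]

theorem exp_mul_exp_neg (A : Matrix m m 𝔸) : NormedSpace.exp A * NormedSpace.exp (-A) = 1 := by
  rw [← exp_add_of_commute _ _ (Commute.refl A).neg_right, add_neg_cancel, NormedSpace.exp_zero]

end

variable [NormedCommRing 𝔸] [NormedAlgebra ℚ 𝔸] {S : Matrix m m 𝔸}

theorem transpose_exp_neg_smul_of_skew (hS : Sᵀ = -S) (t : 𝔸) :
    (NormedSpace.exp (-t • S))ᵀ = NormedSpace.exp (t • S) := by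
  rw [← exp_transpose, transpose_smul, hS, smul_neg, neg_smul, neg_neg]

theorem transpose_one_sub_vecMulVec_mul_mul_exp_mulVec (hS : Sᵀ = -S) (t : 𝔸) (g x w : m → 𝔸) :
    ((1 - vecMulVec g x * S) * NormedSpace.exp (-t • S))ᵀ *ᵥ w =
      NormedSpace.exp (t • S) *ᵥ (w + (g ⬝ᵥ w) • (S *ᵥ x)) := by
  rw [transpose_mul, transpose_exp_neg_smul_of_skew hS, transpose_sub, transpose_one,
    transpose_mul, transpose_vecMulVec, hS, ← mulVec_mulVec, Matrix.neg_mul, sub_neg_eq_add,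
    add_mulVec, one_mulVec, ← mulVec_mulVec, vecMulVec_mulVec, op_smul_eq_smul, mulVec_smul]

end Matrix

-- Any norm on matrices would do; the operator norm makes them a Banach algebra, as the
-- derivative of the exponential requires.
attribute [local instance] Matrix.linftyOpNormedAddCommGroup Matrix.linftyOpNormedSpace
  Matrix.linftyOpNormedRing Matrix.linftyOpNormedAlgebra

section Derivative

variable {𝕜 : Type*} [NontriviallyNormedField 𝕜] {m n : Type*} [Fintype m] [Fintype n]

theorem Matrix.isBoundedBilinearMap_mulVec :
    IsBoundedBilinearMap 𝕜 (fun p : Matrix m n 𝕜 × (n → 𝕜) => p.1 *ᵥ p.2) where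
  add_left A B v := add_mulVec A B v
  smul_left c A v := smul_mulVec c A v
  add_right A u v := mulVec_add A u v
  smul_right c A v := mulVec_smul A c v
  bound := ⟨1, one_pos, fun A v => by simpa using linfty_opNorm_mulVec A v⟩

variable {E : Type*} [NormedAddCommGroup E] [NormedSpace 𝕜 E]

theorem HasFDerivAt.matrix_mulVec {A : E → Matrix m n 𝕜} {v : E → n → 𝕜}
    {A' : E →L[𝕜] Matrix m n 𝕜} {v' : E →L[𝕜] n → 𝕜} {L : E →L[𝕜] m → 𝕜} {x : E}
    (hA : HasFDerivAt A A' x) (hv : HasFDerivAt v v' x)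
    (hL : ∀ w, L w = A' w *ᵥ v x + A x *ᵥ v' w) :
    HasFDerivAt (fun y => A y *ᵥ v y) L x := by
  refine (HasFDerivAt.comp (g := fun p : Matrix m n 𝕜 × (n → 𝕜) => p.1 *ᵥ p.2)
    (f := fun y => (A y, v y)) x (isBoundedBilinearMap_mulVec.hasFDerivAt _)
    (hA.prodMk hv)).congr_fderiv ?_
  ext1 w
  rw [hL]
  exact add_comm _ _

end Derivative

theorem hasFDerivAt_exp_smul_mulVec {𝕂 : Type*} [RCLike 𝕂] {m : Type*} [Fintype m]
    [DecidableEq m] {θ : (m → 𝕂) → 𝕂} {θ' : (m → 𝕂) →L[𝕂] 𝕂} {x : m → 𝕂}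
    (hθ : HasFDerivAt θ θ' x) (S : Matrix m m 𝕂) {L : (m → 𝕂) →L[𝕂] m → 𝕂}
    (hL : ∀ w, L w = NormedSpace.exp (θ x • S) *ᵥ (w + θ' w • (S *ᵥ x))) :
    HasFDerivAt (fun y => NormedSpace.exp (θ y • S) *ᵥ y) L x := by
  have hexp := (hasDerivAt_exp_smul_const S (θ x)).hasFDerivAt.comp x hθ
  refine hexp.matrix_mulVec (hasFDerivAt_id x) fun w => ?_
  -- the chain-rule derivative applied to `w`; stated by hand since it mixes two matrix topologies
  change _ = (θ' w • (NormedSpace.exp (θ x • S) * S)) *ᵥ x + NormedSpace.exp (θ x • S) *ᵥ w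
  rw [hL, mulVec_add, mulVec_smul, smul_mulVec, mulVec_mulVec, add_comm]

/-- Lemma 4 (angular warping gradient): for skew-symmetric `S`, differentiable
`θ : ℝ^{n+1} → ℝ` with gradient `g` at `x` (i.e. `fderiv θ x v = g ⬝ᵥ v`), the map
`T(y) = e^{Sθ(y)} y` is differentiable at `x` with transposed Jacobian
`∇T(x) = (I − g xᵀ S) e^{−Sθ(x)}` (so `fderiv T x v = ∇T(x)ᵀ *ᵥ v`); moreover if
`1 − xᵀ S g ≠ 0` then `∇T(x)` is invertible with inverse
`e^{Sθ(x)} (I + (1 − xᵀ S g)⁻¹ g xᵀ S)`. -/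
theorem stmt13 (n : ℕ) (S : Matrix (Fin (n + 1)) (Fin (n + 1)) ℝ) (hskew : Sᵀ = -S)
    (θ : (Fin (n + 1) → ℝ) → ℝ) (x g : Fin (n + 1) → ℝ)
    (hθ : DifferentiableAt ℝ θ x)
    (hg : ∀ v, fderiv ℝ θ x v = g ⬝ᵥ v)
    (T : (Fin (n + 1) → ℝ) → (Fin (n + 1) → ℝ))
    (hT : ∀ y, T y = NormedSpace.exp (θ y • S) *ᵥ y) :
    DifferentiableAt ℝ T x ∧
    (∀ v, fderiv ℝ T x v =
      ((1 - vecMulVec g x * S) * NormedSpace.exp (-(θ x) • S))ᵀ *ᵥ v) ∧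
    (1 - x ⬝ᵥ (S *ᵥ g) ≠ 0 →
      ((1 - vecMulVec g x * S) * NormedSpace.exp (-(θ x) • S)) *
        (NormedSpace.exp (θ x • S) *
          (1 + (1 - x ⬝ᵥ (S *ᵥ g))⁻¹ • (vecMulVec g x * S))) = 1 ∧
      (NormedSpace.exp (θ x • S) *
          (1 + (1 - x ⬝ᵥ (S *ᵥ g))⁻¹ • (vecMulVec g x * S))) *
        ((1 - vecMulVec g x * S) * NormedSpace.exp (-(θ x) • S)) = 1) := by
  set J := (1 - vecMulVec g x * S) * NormedSpace.exp (-(θ x) • S)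
  have hTx : HasFDerivAt T (Jᵀ.mulVecLin.toContinuousLinearMap) x := by
    rw [show T = _ from funext hT]
    refine hasFDerivAt_exp_smul_mulVec hθ.hasFDerivAt S fun w => ?_
    rw [hg]
    exact transpose_one_sub_vecMulVec_mul_mul_exp_mulVec hskew (θ x) g x w
  refine ⟨hTx.differentiableAt, fun v => by rw [hTx.fderiv]; rfl, fun hc => ?_⟩
  have hsq := vecMulVec_mul_mul_self g x S
  let u : (Matrix (Fin (n + 1)) (Fin (n + 1)) ℝ)ˣ :=
    ⟨_, _, one_sub_mul_one_add_inv_smul hsq hc, one_add_inv_smul_mul_one_sub hsq hc⟩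
  let e : (Matrix (Fin (n + 1)) (Fin (n + 1)) ℝ)ˣ :=
    ⟨NormedSpace.exp (-(θ x) • S), NormedSpace.exp (θ x • S),
      by rw [neg_smul, exp_neg_mul_exp], by rw [neg_smul, exp_mul_exp_neg]⟩
  -- `J = u * e`, and the claimed inverse is `(u * e)⁻¹ = e⁻¹ * u⁻¹`
  exact ⟨(u * e).mul_inv, (u * e).inv_mul⟩
end

section
/- Let q ∈ S^3 be a unit quaternion with scalar part η and vector part ε, and let A ∈ R^{3×3} be symmetric. Define M = diag(0, A) ∈ R^{4×4}. Then q^T M q = ε^T A ε, and moreover ε^T A ε = tr(Ā(I − R(q))) where Ā = (tr(A)/4)I − A/2 and R(q) = I + 2η ε^× + 2(ε^×)² is the rotation matrix associated to q. -/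
open Matrix

/-- For a unit quaternion `q = (η, ε) ∈ S³` and symmetric `A ∈ ℝ^{3×3}`, with
`M = diag(0, A)`, one has `qᵀ M q = εᵀ A ε`, and moreover
`εᵀ A ε = tr(Ā (I − R(q)))` where `Ā = (tr A / 4) I − A/2` and
`R(q) = I + 2η ε^× + 2(ε^×)²`. -/
theorem stmt18 (η : ℝ) (ε : Fin 3 → ℝ) (hq : η ^ 2 + ε ⬝ᵥ ε = 1)
    (A : Matrix (Fin 3) (Fin 3) ℝ) (hA : Aᵀ = A)
    (M : Matrix (Unit ⊕ Fin 3) (Unit ⊕ Fin 3) ℝ)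
    (hM : M = Matrix.fromBlocks 0 0 0 A)
    (q : Unit ⊕ Fin 3 → ℝ) (hQ : q = Sum.elim (fun _ => η) ε)
    (E : Matrix (Fin 3) (Fin 3) ℝ)
    (hE : E = !![0, -ε 2, ε 1; ε 2, 0, -ε 0; -ε 1, ε 0, 0])
    (Abar R : Matrix (Fin 3) (Fin 3) ℝ)
    (hAbar : Abar = (Matrix.trace A / 4) • (1 : Matrix (Fin 3) (Fin 3) ℝ) - (1 / 2 : ℝ) • A)
    (hR : R = 1 + (2 * η) • E + (2 : ℝ) • (E * E)) :
    q ⬝ᵥ (M *ᵥ q) = ε ⬝ᵥ (A *ᵥ ε) ∧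
    ε ⬝ᵥ (A *ᵥ ε) = Matrix.trace (Abar * (1 - R)) := by
  subst hM hQ hE hAbar hR
  have hq' : ε 0 ^ 2 + ε 1 ^ 2 + ε 2 ^ 2 = 1 - η ^ 2 := by
    have := hq; simp [dotProduct, Fin.sum_univ_three] at this; nlinarith [this]
  have hA01 : A 1 0 = A 0 1 := by conv_rhs => rw [← hA, Matrix.transpose_apply]
  have hA02 : A 2 0 = A 0 2 := by conv_rhs => rw [← hA, Matrix.transpose_apply]
  have hA12 : A 2 1 = A 1 2 := by conv_rhs => rw [← hA, Matrix.transpose_apply]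
  constructor
  · simp [dotProduct, Matrix.mulVec, Matrix.fromBlocks, Fin.sum_univ_three, dotProduct]
  · simp [dotProduct, Matrix.mulVec, Matrix.trace, Matrix.diag, Matrix.mul_apply,
      Fin.sum_univ_three, Matrix.one_apply, hA01, hA02, hA12]
    nlinarith [hq', sq_nonneg η]
end

section
/- Let 0 < k < π/4, λ_q > 0, λ_n ≥ λ_q. Then the determinant bound |1 − x^T S ∇θ(x)| ≥ 1 − k λ_q/λ_n > 0 holds, where θ(x) = (k/λ_n) x^T M x, ∇θ(x) = (2k/λ_n) M x, S = u r^T − r u^T with u a unit eigenvector of M for eigenvalue λ_q, r a unit eigenvector for eigenvalue 0, u ⟂ r, M symmetric positive semidefinite with largest eigenvalue λ_n, and x ∈ S^n. -/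
open Matrix

/-- Determinant bound in Theorem 3: with `M` symmetric positive semidefinite,
`Mr = 0`, `Mu = λq • u`, `u, r` orthonormal, `λn` the largest eigenvalue of `M`
(`yᵀMy ≤ λn yᵀy` for all `y` and `λq ≤ λn`), `0 < k < π/4`, `S = u rᵀ − r uᵀ`,
`θ(x) = (k/λn) xᵀMx` with gradient `∇θ(x) = (2k/λn) Mx`, and `x` a unit vector:
`|1 − xᵀ S ∇θ(x)| ≥ 1 − k λq/λn > 0`. -/
theorem stmt19 (n : ℕ) (M : Matrix (Fin (n + 1)) (Fin (n + 1)) ℝ) (hM : M.PosSemidef)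
    (lamq lamn k : ℝ) (hq : 0 < lamq) (hqn : lamq ≤ lamn)
    (hk : 0 < k) (hk' : k < Real.pi / 4)
    (u r : Fin (n + 1) → ℝ)
    (hu : u ⬝ᵥ u = 1) (hr : r ⬝ᵥ r = 1) (hur : u ⬝ᵥ r = 0)
    (hMr : M *ᵥ r = 0) (hMu : M *ᵥ u = lamq • u)
    (hmax : ∀ y : Fin (n + 1) → ℝ, y ⬝ᵥ (M *ᵥ y) ≤ lamn * (y ⬝ᵥ y))
    (S : Matrix (Fin (n + 1)) (Fin (n + 1)) ℝ) (hS : S = vecMulVec u r - vecMulVec r u)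
    (x : Fin (n + 1) → ℝ) (hx : x ⬝ᵥ x = 1) :
    |1 - x ⬝ᵥ (S *ᵥ ((2 * k / lamn) • (M *ᵥ x)))| ≥ 1 - k * lamq / lamn ∧
      (0 : ℝ) < 1 - k * lamq / lamn := by
  have hn : 0 < lamn := lt_of_lt_of_le hq hqn
  have hsym : Mᵀ = M := hM.1
  set a : ℝ := u ⬝ᵥ x with ha
  set b : ℝ := r ⬝ᵥ x with hb
  -- r ⬝ᵥ (M *ᵥ x) = 0
  have hrMx : r ⬝ᵥ (M *ᵥ x) = 0 := by
    rw [dotProduct_mulVec, ← mulVec_transpose, hsym, hMr, zero_dotProduct]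
  have huMx : u ⬝ᵥ (M *ᵥ x) = lamq * a := by
    rw [dotProduct_mulVec, ← mulVec_transpose, hsym, hMu, smul_dotProduct]
    rfl
  -- compute the quadratic form
  have hE : x ⬝ᵥ (S *ᵥ ((2 * k / lamn) • (M *ᵥ x)))
      = -(2 * k / lamn) * lamq * a * b := by
    subst hS
    rw [mulVec_smul, dotProduct_smul, sub_mulVec]
    have h1 : ∀ v w z : Fin (n+1) → ℝ, vecMulVec v w *ᵥ z = (w ⬝ᵥ z) • v := by
      intro v w z
      ext i
      simp only [vecMulVec, mulVec, dotProduct, Pi.smul_apply, smul_eq_mul, of_apply,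
        Finset.sum_mul]
      exact Finset.sum_congr rfl fun j _ => by ring
    rw [dotProduct_sub, h1, h1, hrMx, huMx, dotProduct_smul, dotProduct_smul,
      dotProduct_comm x u, dotProduct_comm x r, ← ha, ← hb]
    simp only [smul_eq_mul]
    ring
  -- Bessel: a^2 + b^2 ≤ 1
  have hbessel : a ^ 2 + b ^ 2 ≤ 1 := by
    have hy : (0:ℝ) ≤ (x - a • u - b • r) ⬝ᵥ (x - a • u - b • r) := by
      apply Finset.sum_nonneg
      intro i _
      exact mul_self_nonneg _
    have hexp : (x - a • u - b • r) ⬝ᵥ (x - a • u - b • r)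
        = 1 - a ^ 2 - b ^ 2 := by
      simp only [sub_dotProduct, dotProduct_sub, smul_dotProduct, dotProduct_smul,
        dotProduct_comm x u, dotProduct_comm x r, dotProduct_comm r u,
        hu, hr, hur, hx, ← ha, ← hb, smul_eq_mul]
      ring
    linarith [hexp ▸ hy]
  have hab : 2 * |a * b| ≤ 1 := by
    rcases abs_cases (a * b) with ⟨h, _⟩ | ⟨h, _⟩ <;>
      nlinarith [sq_nonneg (a - b), sq_nonneg (a + b), hbessel]
  have hklt1 : k < 1 := by
    nlinarith [Real.pi_lt_d2]
  have hpos : (0:ℝ) < 1 - k * lamq / lamn := by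
    rw [sub_pos, div_lt_one hn]
    nlinarith
  refine ⟨?_, hpos⟩
  rw [hE]
  have habs : |(-(2 * k / lamn) * lamq * a * b)| ≤ k * lamq / lamn := by
    have : |(-(2 * k / lamn) * lamq * a * b)| = (2 * k / lamn) * lamq * |a * b| := by
      rw [show (-(2 * k / lamn) * lamq * a * b) = -((2 * k / lamn) * lamq * (a * b)) by ring,
        abs_neg, abs_mul]
      rw [abs_of_nonneg (by positivity)]
    rw [this]
    rw [div_mul_eq_mul_div, div_mul_eq_mul_div, div_le_div_iff₀ hn hn]
    nlinarith [mul_nonneg hn.le (mul_nonneg (mul_nonneg hk.le hq.le)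
      (by linarith : (0:ℝ) ≤ 1 - 2 * |a * b|))]
  calc |1 - -(2 * k / lamn) * lamq * a * b|
      ≥ 1 - |(-(2 * k / lamn) * lamq * a * b)| := by
        rcases abs_cases (1 - -(2 * k / lamn) * lamq * a * b) with ⟨h, _⟩ | ⟨h, _⟩ <;>
          rcases abs_cases (-(2 * k / lamn) * lamq * a * b) with ⟨h2, _⟩ | ⟨h2, _⟩ <;>
            linarith
    _ ≥ 1 - k * lamq / lamn := by linarith
end
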